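/- For every positive integer n and every complex number x: ∑_{k=0}^{n} binom(n, k) · H_{n−k} · x^k = (1+x)^n · H_n − ∑_{k=1}^{n} (1/k) · x^k · (1+x)^{n−k}. (This is the denominator-cleared form of the paper's identity ∑_{k=0}^{n} binom(n,k) H_{n−k} x^k = (1+x)^n [H_n − ∑_{k=1}^{n} (1/k)(x/(1+x))^k].) -/

import Mathlib

/-!
Write `A n` for the left-hand side and `B n` for the right-hand side. Both vanish at `n = 0` and
satisfy `F (n + 1) = (1 + x) * F n + ((1 + x) ^ (n + 1) - x ^ (n + 1)) / (n + 1)`. For `B` this is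
immediate from `H (n + 1) = H n + 1 / (n + 1)`. For `A`, Pascal's rule splits `A (n + 1)` into
`x * A n` plus `∑ C(n, k) H (n + 1 - k) x ^ k`; in the latter,
`H (n + 1 - k) = H (n - k) + 1 / (n + 1 - k)` and `C(n, k) / (n + 1 - k) = C(n + 1, k) / (n + 1)`,
so the binomial theorem gives the extra term.
-/

/-- Generalized binomial coefficient `C(s,k) = s(s-1)⋯(s-k+1)/k!` for complex `s`. -/
noncomputable def genChoose (s : ℂ) (k : ℕ) : ℂ :=
  (∏ i ∈ Finset.range k, (s - i)) / (Nat.factorial k)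

/-- The `n`-th harmonic number as a complex number. -/
noncomputable def Hc (n : ℕ) : ℂ := ∑ i ∈ Finset.range n, 1 / (i + 1)

/-- The `n`-th generalized harmonic number of order 2 as a complex number. -/
noncomputable def H2c (n : ℕ) : ℂ := ∑ i ∈ Finset.range n, 1 / ((i : ℂ) + 1) ^ 2

open Finset

theorem sum_range_choose_succ_mul_pow {R : Type*} [CommRing R] (x : R) (n : ℕ) :
    ∑ k ∈ range (n + 1), ((n + 1).choose k : R) * x ^ k = (1 + x) ^ (n + 1) - x ^ (n + 1) := by
  rw [add_comm 1 x, add_pow, sum_range_succ _ (n + 1), Nat.choose_self]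
  simp only [one_pow, mul_one, Nat.cast_one, add_sub_cancel_right]
  exact sum_congr rfl fun k _ => mul_comm _ _

theorem sum_range_choose_succ_mul_mul_pow {R : Type*} [CommSemiring R]
    (a : ℕ → R) (x : R) (n : ℕ) :
    ∑ k ∈ range (n + 2), ((n + 1).choose k : R) * a (n + 1 - k) * x ^ k =
      ∑ k ∈ range (n + 1), (n.choose k : R) * a (n + 1 - k) * x ^ k +
        x * ∑ k ∈ range (n + 1), (n.choose k : R) * a (n - k) * x ^ k := by
  simp only [mul_assoc, sum_choose_succ_mul (fun i j => a j * x ^ i), mul_sum]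
  congr 1
  refine sum_congr rfl fun k _ => ?_
  ring

theorem Nat.cast_choose_div_succ_sub {K : Type*} [Field K] [CharZero K] {n k : ℕ} (hk : k ≤ n) :
    (n.choose k : K) / ((n - k : ℕ) + 1) = (n + 1).choose k / (n + 1) := by
  rw [div_eq_div_iff (Nat.cast_add_one_ne_zero _) (Nat.cast_add_one_ne_zero _)]
  exact_mod_cast (Nat.choose_mul_succ_eq n k).trans (by rw [Nat.succ_sub hk])

theorem sum_Icc_div_mul_pow_mul_pow_succ {K : Type*} [Field K] (x : K) (n : ℕ) :
    ∑ k ∈ Icc 1 (n + 1), 1 / (k : K) * x ^ k * (1 + x) ^ (n + 1 - k) =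
      (1 + x) * ∑ k ∈ Icc 1 n, 1 / (k : K) * x ^ k * (1 + x) ^ (n - k) +
        x ^ (n + 1) / (n + 1) := by
  rw [sum_Icc_succ_top (by omega), mul_sum, Nat.sub_self, pow_zero]
  congr 1
  · refine sum_congr rfl fun k hk => ?_
    rw [Nat.sub_add_comm (mem_Icc.1 hk).2, pow_succ]
    ring
  · push_cast
    ring

theorem Hc_succ (n : ℕ) : Hc (n + 1) = Hc n + 1 / (n + 1) := by
  simp [Hc, sum_range_succ]

theorem sum_range_choose_mul_Hc_succ_sub_mul_pow (x : ℂ) (n : ℕ) :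
    ∑ k ∈ range (n + 1), (n.choose k : ℂ) * Hc (n + 1 - k) * x ^ k =
      ∑ k ∈ range (n + 1), (n.choose k : ℂ) * Hc (n - k) * x ^ k +
        ((1 + x) ^ (n + 1) - x ^ (n + 1)) / (n + 1) := by
  rw [← sum_range_choose_succ_mul_pow, sum_div, ← sum_add_distrib]
  refine sum_congr rfl fun k hk => ?_
  have hkn : k ≤ n := Nat.lt_succ_iff.1 (mem_range.1 hk)
  rw [Nat.sub_add_comm hkn, Hc_succ]
  linear_combination x ^ k * Nat.cast_choose_div_succ_sub (K := ℂ) hkn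

theorem sum_range_choose_mul_Hc_sub_mul_pow_succ (x : ℂ) (n : ℕ) :
    ∑ k ∈ range (n + 2), ((n + 1).choose k : ℂ) * Hc (n + 1 - k) * x ^ k =
      (1 + x) * ∑ k ∈ range (n + 1), (n.choose k : ℂ) * Hc (n - k) * x ^ k +
        ((1 + x) ^ (n + 1) - x ^ (n + 1)) / (n + 1) := by
  rw [sum_range_choose_succ_mul_mul_pow, sum_range_choose_mul_Hc_succ_sub_mul_pow]
  ring

theorem stmt_14_general (n : ℕ) (x : ℂ) :
    ∑ k ∈ Finset.range (n + 1), (Nat.choose n k : ℂ) * Hc (n - k) * x ^ k =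
      (1 + x) ^ n * Hc n -
        ∑ k ∈ Finset.Icc 1 n, 1 / (k : ℂ) * x ^ k * (1 + x) ^ (n - k) := by
  induction n with
  | zero => simp [Hc]
  | succ n ih =>
    rw [sum_range_choose_mul_Hc_sub_mul_pow_succ, ih, sum_Icc_div_mul_pow_mul_pow_succ, Hc_succ]
    ring

theorem stmt_14 (n : ℕ) (hn : 0 < n) (x : ℂ) :
    ∑ k ∈ Finset.range (n + 1), (Nat.choose n k : ℂ) * Hc (n - k) * x ^ k =
      (1 + x) ^ n * Hc n -
        ∑ k ∈ Finset.Icc 1 n, 1 / (k : ℂ) * x ^ k * (1 + x) ^ (n - k) :=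
  stmt_14_general n x
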